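/- Let g be bounded below, differentiable with L-Lipschitz gradient, and (x_n), (y_n) generated by the inertial algorithm y_n = x_n + (βn/(n+α))(x_n - x_{n-1}), x_{n+1} = y_n - s∇g(y_n) with β ∈ (0,1), α > 0, 0 < s < 2(1-β)/L. Then every cluster point x̄ of (x_n) is a critical point of g, and the cluster point sets of (x_n) and (y_n) coincide. -/

import Mathlib

/-!
With `xₙ₊₁ = yₙ - s ∇g(yₙ)`, the descent lemma applied at `yₙ` in the directions of `xₙ₊₁` and
of `xₙ`, together with `‖yₙ - xₙ‖ ≤ β ‖xₙ - xₙ₋₁‖` and AM-GM, shows that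
`Hₙ = g(xₙ) + c ‖xₙ - xₙ₋₁‖²` decreases by at least `δ ‖xₙ - xₙ₋₁‖²` per step, where
`δ > 0` follows from the step-size condition `s < 2(1 - β)/L`. As `g` is bounded below, the
squared increments are summable, so `xₙ₊₁ - xₙ → 0`, hence `yₙ - xₙ → 0` and
`∇g(yₙ) = (yₙ - xₙ₊₁)/s → 0`. Thus `(xₙ)` and `(yₙ)` have the same cluster points, and at any
of them `∇g` vanishes by continuity.
-/

open Filter Topology

theorem summable_of_add_le_of_bddBelow {H D : ℕ → ℝ} (hH : BddBelow (Set.range H))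
    (hD : ∀ n, 0 ≤ D n) (h : ∀ n, H (n + 1) + D n ≤ H n) : Summable D := by
  obtain ⟨B, hB⟩ := hH
  have htel : ∀ N, H N + ∑ k ∈ Finset.range N, D k ≤ H 0 := by
    intro N
    induction N with
    | zero => simp
    | succ N ih => rw [Finset.sum_range_succ]; linarith [h N]
  refine summable_of_sum_range_le (c := H 0 - B) hD fun N => ?_
  linarith [htel N, hB ⟨N, rfl⟩]

-- With `σ = L s` this reads `σβ² + |1 - σ|β < 1 - σ/2`, which is where `σ < 2(1 - β)` enters.
theorem lyapunov_coeff_lt {L s β : ℝ} (hs : 0 < s) (hβ₀ : 0 ≤ β) (hβ₁ : β < 1)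
    (hLs : L * s < 2 * (1 - β)) : L * β ^ 2 + |1 / s - L| * β < 1 / s - L / 2 := by
  have habs : |1 / s - L| = |1 - L * s| / s := by
    rw [← abs_of_pos hs, ← abs_div, abs_of_pos hs]
    field_simp
  have key : L * s * β ^ 2 + |1 - L * s| * β < 1 - L * s / 2 := by
    rcases abs_cases (1 - L * s) with ⟨h, -⟩ | ⟨h, -⟩ <;> rw [h]
    · nlinarith [mul_lt_mul_of_pos_right hLs (by nlinarith : (0 : ℝ) < 1 / 2 - β + β ^ 2),
        mul_nonneg hβ₀ (sq_nonneg (1 - β))]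
    · nlinarith [mul_lt_mul_of_pos_right hLs (by positivity : (0 : ℝ) < 1 / 2 + β + β ^ 2),
        pow_nonneg hβ₀ 3]
  rw [habs]
  refine lt_of_mul_lt_mul_right ?_ hs.le
  field_simp
  linarith

theorem norm_inertial_smul_le {E : Type*} [SeminormedAddCommGroup E] [NormedSpace ℝ E]
    {β α : ℝ} (hβ : 0 ≤ β) (hα : 0 ≤ α) (n : ℕ) (v : E) :
    ‖(β * n / (n + α)) • v‖ ≤ β * ‖v‖ := by
  rw [norm_smul, Real.norm_of_nonneg (by positivity)]
  gcongr
  exact div_le_of_le_mul₀ (by positivity) hβ (by nlinarith)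

section

variable {F : Type*} [NormedAddCommGroup F] [InnerProductSpace ℝ F] [CompleteSpace F]
  {g : F → ℝ} {L : ℝ}

theorem continuous_gradient_of_lipschitz
    (hlip : ∀ u v, ‖gradient g u - gradient g v‖ ≤ L * ‖u - v‖) : Continuous (gradient g) :=
  (LipschitzWith.of_dist_le' fun u v => by simpa only [dist_eq_norm] using hlip u v).continuous

theorem abs_sub_sub_inner_gradient_le (hdiff : Differentiable ℝ g)
    (hlip : ∀ u v, ‖gradient g u - gradient g v‖ ≤ L * ‖u - v‖) (a b : F) :
    |g b - g a - inner ℝ (gradient g a) (b - a)| ≤ L / 2 * ‖b - a‖ ^ 2 := by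
  set f : ℝ → ℝ := fun t => g (a + t • (b - a)) - g a - t * inner ℝ (gradient g a) (b - a)
  have hf : ∀ t,
      HasDerivAt f (inner ℝ (gradient g (a + t • (b - a)) - gradient g a) (b - a)) t := by
    intro t
    have hline : HasDerivAt (fun t : ℝ => a + t • (b - a)) (b - a) t := by
      simpa using ((hasDerivAt_id t).smul_const (b - a)).const_add a
    have := (((hdiff _).hasFDerivAt.comp_hasDerivAt t hline).sub_const (g a)).sub
      ((hasDerivAt_id t).mul_const (inner ℝ (gradient g a) (b - a)))
    exact this.congr_deriv (by rw [inner_sub_left, inner_gradient_left]; simp)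
  have hB (t : ℝ) :
      HasDerivAt (fun t => L / 2 * ‖b - a‖ ^ 2 * t ^ 2) (L * ‖b - a‖ ^ 2 * t) t :=
    ((hasDerivAt_pow 2 t).const_mul (L / 2 * ‖b - a‖ ^ 2)).congr_deriv
      (by simp only [Nat.cast_ofNat, Nat.add_one_sub_one, pow_one]; ring)
  have hbound : ∀ t ∈ Set.Ico (0 : ℝ) 1,
      ‖inner ℝ (gradient g (a + t • (b - a)) - gradient g a) (b - a)‖ ≤ L * ‖b - a‖ ^ 2 * t := by
    rintro t ⟨ht, -⟩
    calc ‖inner ℝ (gradient g (a + t • (b - a)) - gradient g a) (b - a)‖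
        ≤ ‖gradient g (a + t • (b - a)) - gradient g a‖ * ‖b - a‖ := norm_inner_le_norm _ _
      _ ≤ L * ‖t • (b - a)‖ * ‖b - a‖ := by
        gcongr
        simpa using hlip (a + t • (b - a)) a
      _ = L * ‖b - a‖ ^ 2 * t := by
        rw [norm_smul, Real.norm_of_nonneg ht]; ring
  have := image_norm_le_of_norm_deriv_right_le_deriv_boundary
    (fun t _ => (hf t).continuousAt.continuousWithinAt) (fun t _ => (hf t).hasDerivWithinAt)
    (by simp [f]) hB hbound (Set.right_mem_Icc.2 zero_le_one)
  simpa [f] using this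

theorem gradient_step_le (hdiff : Differentiable ℝ g)
    (hlip : ∀ u v, ‖gradient g u - gradient g v‖ ≤ L * ‖u - v‖) {s : ℝ} (hs : s ≠ 0)
    {x y z : F} (hz : z = y - s • gradient g y) :
    g z ≤ g x - (1 / s - L / 2) * ‖z - x‖ ^ 2 + (1 / s - L) * inner ℝ (y - x) (z - x)
      + L * ‖y - x‖ ^ 2 := by
  have hgrad : gradient g y = s⁻¹ • ((y - x) - (z - x)) := by
    rw [hz, sub_sub_sub_cancel_right, sub_sub_cancel, inv_smul_smul₀ hs]
  have hzy : z - y = (z - x) - (y - x) := (sub_sub_sub_cancel_right z y x).symm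
  have hxy : x - y = -(y - x) := (neg_sub y x).symm
  have h₁ := (abs_le.1 (abs_sub_sub_inner_gradient_le hdiff hlip y z)).2
  have h₂ := (abs_le.1 (abs_sub_sub_inner_gradient_le hdiff hlip y x)).1
  rw [hgrad, hzy] at h₁
  rw [hgrad, hxy, norm_neg] at h₂
  generalize y - x = u, z - x = d at h₁ h₂ ⊢
  simp only [norm_sub_sq_real, inner_smul_left, inner_sub_left, inner_sub_right, inner_neg_right,
    real_inner_comm u d, real_inner_self_eq_norm_sq, RCLike.conj_to_real] at h₁ h₂ ⊢
  linear_combination h₁ + h₂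

theorem inertial_step_lyapunov_le (hdiff : Differentiable ℝ g)
    (hlip : ∀ u v, ‖gradient g u - gradient g v‖ ≤ L * ‖u - v‖) (hL : 0 ≤ L) {s β : ℝ}
    (hs : s ≠ 0) (hβ : 0 ≤ β) {w x y z : F} (hy : ‖y - x‖ ≤ β * ‖x - w‖)
    (hz : z = y - s • gradient g y) :
    g z + (1 / s - L / 2 - |1 / s - L| * β / 2) * ‖z - x‖ ^ 2
      ≤ g x + (L * β ^ 2 + |1 / s - L| * β / 2) * ‖x - w‖ ^ 2 := by
  have hdesc := gradient_step_le hdiff hlip hs (x := x) hz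
  have hinner : (1 / s - L) * inner ℝ (y - x) (z - x) ≤ |1 / s - L| * (β * ‖x - w‖ * ‖z - x‖) :=
    calc (1 / s - L) * inner ℝ (y - x) (z - x)
        ≤ |1 / s - L| * |inner ℝ (y - x) (z - x)| := by rw [← abs_mul]; exact le_abs_self _
      _ ≤ |1 / s - L| * (β * ‖x - w‖ * ‖z - x‖) := by
        gcongr
        exact (abs_real_inner_le_norm _ _).trans (by gcongr)
  have hamgm : β * ‖x - w‖ * ‖z - x‖ ≤ β / 2 * (‖x - w‖ ^ 2 + ‖z - x‖ ^ 2) := by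
    nlinarith [mul_nonneg hβ (sq_nonneg (‖x - w‖ - ‖z - x‖))]
  have hsq : ‖y - x‖ ^ 2 ≤ β ^ 2 * ‖x - w‖ ^ 2 := by
    rw [← mul_pow]; gcongr
  nlinarith [mul_le_mul_of_nonneg_left hamgm (abs_nonneg (1 / s - L)),
    mul_le_mul_of_nonneg_left hsq hL]

theorem summable_norm_sub_sq_of_inertial (hdiff : Differentiable ℝ g)
    (hlip : ∀ u v, ‖gradient g u - gradient g v‖ ≤ L * ‖u - v‖) (hbdd : BddBelow (Set.range g))
    (hL : 0 ≤ L) {s β : ℝ} (hs : 0 < s) (hβ₀ : 0 ≤ β) (hβ₁ : β < 1)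
    (hLs : L * s < 2 * (1 - β)) {x y : ℕ → F}
    (hy : ∀ n, ‖y n - x (n + 1)‖ ≤ β * ‖x (n + 1) - x n‖)
    (hstep : ∀ n, x (n + 2) = y n - s • gradient g (y n)) :
    Summable fun n => ‖x (n + 1) - x n‖ ^ 2 := by
  have hlyap (n : ℕ) :=
    inertial_step_lyapunov_le hdiff hlip hL hs.ne' hβ₀ (hy n) (hstep n : x (n + 1 + 1) = _)
  set c := 1 / s - L / 2 - |1 / s - L| * β / 2
  set c' := L * β ^ 2 + |1 / s - L| * β / 2
  have hgap : c' < c := by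
    simp only [c, c']
    linarith [lyapunov_coeff_lt hs hβ₀ hβ₁ hLs]
  have hc' : 0 ≤ c' := by positivity
  obtain ⟨B, hB⟩ := hbdd
  have hH : BddBelow (Set.range fun n => g (x (n + 1)) + c * ‖x (n + 1) - x n‖ ^ 2) := by
    refine ⟨B, ?_⟩
    rintro _ ⟨n, rfl⟩
    nlinarith [hB ⟨x (n + 1), rfl⟩, sq_nonneg ‖x (n + 1) - x n‖]
  refine (summable_mul_left_iff (sub_pos.2 hgap).ne').1
    (summable_of_add_le_of_bddBelow hH (fun n => by positivity) fun n => ?_)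
  linarith [hlyap n]

end

theorem cluster_points_critical_general {m : ℕ} (g : EuclideanSpace ℝ (Fin m) → ℝ) (L : ℝ)
    (hdiff : Differentiable ℝ g)
    (hlip : ∀ u v, ‖gradient g u - gradient g v‖ ≤ L * ‖u - v‖)
    (hbdd : BddBelow (Set.range g))
    (β α s : ℝ) (hβ₁ : 0 < β) (hβ₂ : β < 1) (hα : 0 < α)
    (hs₁ : 0 < s) (hs₂ : s < 2 * (1 - β) / L)
    (x y : ℕ → EuclideanSpace ℝ (Fin m))
    (hy : ∀ n : ℕ, y n = x (n + 1) + ((β * n) / ((n : ℝ) + α)) • (x (n + 1) - x n))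
    (hstep : ∀ n : ℕ, x (n + 2) = y n - s • gradient g (y n)) :
    (∀ p, (∃ φ : ℕ → ℕ, StrictMono φ ∧
        Tendsto (fun k => x (φ k + 1)) atTop (𝓝 p)) → gradient g p = 0) ∧
    {p | ∃ φ : ℕ → ℕ, StrictMono φ ∧ Tendsto (fun k => x (φ k + 1)) atTop (𝓝 p)} =
      {p | ∃ φ : ℕ → ℕ, StrictMono φ ∧ Tendsto (fun k => y (φ k)) atTop (𝓝 p)} := by
  have hL : 0 < L := by
    by_contra! hL
    exact hs₁.not_gt (hs₂.trans_le (div_nonpos_of_nonneg_of_nonpos (by linarith) hL))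
  have hyx : ∀ n, ‖y n - x (n + 1)‖ ≤ β * ‖x (n + 1) - x n‖ := fun n => by
    simpa [hy n] using norm_inertial_smul_le hβ₁.le hα.le n (x (n + 1) - x n)
  have hdx : Tendsto (fun n => ‖x (n + 1) - x n‖) atTop (𝓝 0) := by
    simpa using (summable_norm_sub_sq_of_inertial hdiff hlip hbdd hL.le hs₁ hβ₁.le hβ₂
      ((lt_div_iff₀' hL).1 hs₂) hyx hstep).tendsto_atTop_zero.sqrt
  have hyx₀ : Tendsto (fun n => y n - x (n + 1)) atTop (𝓝 0) :=
    tendsto_zero_iff_norm_tendsto_zero.2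
      (squeeze_zero (fun _ => norm_nonneg _) hyx (by simpa using hdx.const_mul β))
  have hgrad : Tendsto (fun n => gradient g (y n)) atTop (𝓝 0) := by
    have h : ∀ n, gradient g (y n) = s⁻¹ • ((y n - x (n + 1)) - (x (n + 1 + 1) - x (n + 1))) :=
      fun n => by rw [hstep, sub_sub_sub_cancel_right, sub_sub_cancel, inv_smul_smul₀ hs₁.ne']
    simpa [h] using (hyx₀.sub ((tendsto_zero_iff_norm_tendsto_zero.2 hdx).comp
      (tendsto_add_atTop_nat 1))).const_smul s⁻¹
  have hiff (φ : ℕ → ℕ) (hφ : StrictMono φ) (p) :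
      Tendsto (fun k => x (φ k + 1)) atTop (𝓝 p) ↔ Tendsto (fun k => y (φ k)) atTop (𝓝 p) :=
    tendsto_iff_of_dist (by simpa [dist_eq_norm, norm_sub_rev, Function.comp_def] using
      (tendsto_zero_iff_norm_tendsto_zero.1 hyx₀).comp hφ.tendsto_atTop)
  refine ⟨fun p ⟨φ, hφ, hxφ⟩ => ?_,
    Set.ext fun p => exists_congr fun φ => and_congr_right fun hφ => hiff φ hφ p⟩
  exact tendsto_nhds_unique (((continuous_gradient_of_lipschitz hlip).tendsto p).comp
    ((hiff φ hφ p).1 hxφ)) (hgrad.comp hφ.tendsto_atTop)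

/-- For the inertial algorithm with `g` bounded below, every cluster point of
`(xₙ)` is a critical point of `g`, and the cluster point sets of `(xₙ)` and
`(yₙ)` coincide. (Indexing: `x (n+1)` plays the role of `xₙ`.) -/
theorem cluster_points_critical {m : ℕ} (g : EuclideanSpace ℝ (Fin m) → ℝ) (L : ℝ)
    (hdiff : Differentiable ℝ g)
    (hlip : ∀ u v, ‖gradient g u - gradient g v‖ ≤ L * ‖u - v‖)
    (hbdd : BddBelow (Set.range g))
    (β α s : ℝ) (hβ₁ : 0 < β) (hβ₂ : β < 1) (hα : 0 < α)
    (hs₁ : 0 < s) (hs₂ : s < 2 * (1 - β) / L) (hL : 0 < L)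
    (x y : ℕ → EuclideanSpace ℝ (Fin m)) (hinit : x 0 = x 1)
    (hy : ∀ n : ℕ, y n = x (n + 1) + ((β * n) / ((n : ℝ) + α)) • (x (n + 1) - x n))
    (hstep : ∀ n : ℕ, x (n + 2) = y n - s • gradient g (y n)) :
    (∀ p, (∃ φ : ℕ → ℕ, StrictMono φ ∧
        Tendsto (fun k => x (φ k + 1)) atTop (𝓝 p)) → gradient g p = 0) ∧
    {p | ∃ φ : ℕ → ℕ, StrictMono φ ∧ Tendsto (fun k => x (φ k + 1)) atTop (𝓝 p)} =
      {p | ∃ φ : ℕ → ℕ, StrictMono φ ∧ Tendsto (fun k => y (φ k)) atTop (𝓝 p)} :=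
  cluster_points_critical_general g L hdiff hlip hbdd β α s hβ₁ hβ₂ hα hs₁ hs₂ x y hy hstep
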